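/- Let p > 3 be a prime and n, k integers coprime to p. Let χ_L be the Legendre symbol character mod p. Then ∑_{m=1}^{p-1} χ_L(m)·|∑_{a=1}^{p-1} χ₀(m·a + n·ā)·e(k·a/p)|² = χ_L(-n·k²)·(p - 4). -/

import Mathlib

/-!
Write `S(m)` for the inner sum and expand `|S(m)|²` as a double sum over `a, b`, then sum over
`m` first. The principal-character weights only remove the two values `m = -n/a²` and
`m = -n/b²`; since `χ_L` sums to zero and `χ_L(-n/a²) = χ_L(-n)`, the `m`-sum equals
`χ_L(-n) ([a = ±b] - 2)`. The diagonal `a = ±b` then contributes `∑_{a ≠ 0} (1 + e(2ka)) = p - 2`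
and the full double sum is `|∑_{a ≠ 0} e(ka)|² = 1`, giving `χ_L(-n) (p - 4)`; finally
`χ_L(-n k²) = χ_L(-n)`.
-/

open Finset Complex

/-- `e p x = e^{2πi x/p}` for `x : ZMod p`. -/
noncomputable def e (p : ℕ) [NeZero p] (x : ZMod p) : ℂ :=
  Complex.exp (2 * Real.pi * Complex.I * x.val / p)

/-- Gauss sum `τ(f) = ∑_{a mod p} f(a) e^{2πia/p}` associated to `f : ZMod p → ℂ`. -/
noncomputable def gaussSum' (p : ℕ) [NeZero p] (f : ZMod p → ℂ) : ℂ :=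
  ∑ a : ZMod p, f a * e p a

/-- The Legendre symbol character mod `p`, with complex values. -/
noncomputable def legChar (p : ℕ) [Fact p.Prime] : DirichletCharacter ℂ p :=
  (quadraticChar (ZMod p)).ringHomComp (Int.castRingHom ℂ)

namespace AddChar

lemma sq_norm_sum_ofReal_mul_eq_sum_sum {G ι : Type*} [AddCommGroup G] [Finite G]
    (ψ : AddChar G ℂ) (s : Finset ι) (w : ι → ℝ) (f : ι → G) :
    ((‖∑ i ∈ s, (w i : ℂ) * ψ (f i)‖ : ℂ)) ^ 2
      = ∑ i ∈ s, ∑ j ∈ s, (w i * w j : ℂ) * ψ (f i - f j) := by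
  rw [← Complex.mul_conj', map_sum, sum_mul_sum]
  refine sum_congr rfl fun i _ => sum_congr rfl fun j _ => ?_
  rw [map_mul, Complex.conj_ofReal, ← map_neg_eq_conj, sub_eq_add_neg, map_add_eq_mul]
  ring

lemma sum_filter_ne_zero_mul_left {R R' : Type*} [CommRing R] [Fintype R] [DecidableEq R]
    [CommRing R'] [IsDomain R'] {ψ : AddChar R R'} (hψ : ψ.IsPrimitive) {c : R} (hc : c ≠ 0) :
    ∑ x ∈ univ.filter (· ≠ 0), ψ (c * x) = -1 := by
  have h := sum_mulShift c hψ
  rw [if_neg hc, ← sum_filter_add_sum_filter_not univ (· ≠ 0)] at h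
  simp_rw [not_not, filter_eq' univ, if_pos (mem_univ _), sum_singleton, zero_mul,
    map_zero_eq_one, mul_comm _ c, Nat.cast_zero] at h
  exact eq_neg_of_add_eq_zero_left h

end AddChar

lemma MulChar.one_apply_eq_ite {F R : Type*} [Field F] [DecidableEq F] [CommRing R]
    [Nontrivial R] (x : F) : (1 : MulChar F R) x = if x = 0 then 0 else 1 := by
  split_ifs with hx
  · rw [hx, MulChar.map_zero]
  · exact MulChar.one_apply (isUnit_iff_ne_zero.mpr hx)

lemma Fintype.sum_mul_ite_ne_mul_ite_ne {α R : Type*} [Fintype α] [DecidableEq α] [CommRing R]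
    {f : α → R} (hf : ∑ x, f x = 0) (A B : α) :
    ∑ x, f x * ((if x = A then 0 else 1) * (if x = B then 0 else 1))
      = (if A = B then f A else 0) - f A - f B := by
  have hpt : ∀ x, f x * ((if x = A then 0 else 1) * (if x = B then 0 else 1))
      = f x - (if x = A then f x else 0) - (if x = B then f x else 0)
        + (if x = A then (if A = B then f x else 0) else 0) := by
    intro x
    by_cases hA : x = A <;> by_cases hB : x = B <;> simp_all
  simp only [hpt, sum_add_distrib, sum_sub_distrib, hf, sum_ite_eq']
  split_ifs <;> ring

lemma sum_filter_ne_zero_ite_sq_eq_sq {F M : Type*} [Field F] [Fintype F] [DecidableEq F]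
    [AddCommMonoid M] (hF : ringChar F ≠ 2) (g : F → M) {a : F} (ha : a ≠ 0) :
    ∑ b ∈ univ.filter (· ≠ 0), (if a ^ 2 = b ^ 2 then g b else 0) = g a + g (-a) := by
  have hset : (univ.filter (· ≠ 0)).filter (fun b => a ^ 2 = b ^ 2) = {a, -a} := by
    ext b
    simp only [mem_filter, mem_univ, true_and, mem_insert, mem_singleton,
      sq_eq_sq_iff_eq_or_eq_neg]
    constructor
    · rintro ⟨-, rfl | rfl⟩ <;> simp
    · rintro (rfl | rfl) <;> simp [ha]
  rw [← sum_filter, hset, sum_pair]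
  intro h
  exact ha ((Ring.eq_self_iff_eq_zero_of_char_ne_two hF).mp h.symm)

lemma MulChar.one_apply_mul_add_mul_inv {F R : Type*} [Field F] [DecidableEq F] [CommRing R]
    [Nontrivial R] (m n : F) {a : F} (ha : a ≠ 0) :
    (1 : MulChar F R) (m * a + n * a⁻¹) = if m = -n * a⁻¹ ^ 2 then 0 else 1 := by
  have hiff : m * a + n * a⁻¹ = 0 ↔ m = -n * a⁻¹ ^ 2 := by
    constructor <;> intro h <;> field_simp at h ⊢ <;> linear_combination h
  simp only [one_apply_eq_ite, hiff]

namespace MulChar.IsQuadratic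

variable {F R : Type*} [Field F] [CommRing R] {χ : MulChar F R}

lemma apply_mul_sq (hχ : χ.IsQuadratic) (x : F) {y : F} (hy : y ≠ 0) : χ (x * y ^ 2) = χ x := by
  rw [map_mul, map_pow, ← pow_apply' χ two_ne_zero, hχ.sq_eq_one,
    one_apply (isUnit_iff_ne_zero.mpr hy), mul_one]

lemma sum_mul_ite_ne_mul_ite_ne [Fintype F] [DecidableEq F] [IsDomain R] (hχ : χ.IsQuadratic)
    (hχ1 : χ ≠ 1) {n a b : F} (hn : n ≠ 0) (ha : a ≠ 0) (hb : b ≠ 0) :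
    ∑ m, χ m * ((if m = -n * a⁻¹ ^ 2 then 0 else 1) * (if m = -n * b⁻¹ ^ 2 then 0 else 1))
      = χ (-n) * ((if a ^ 2 = b ^ 2 then 1 else 0) - 2) := by
  have hab : -n * a⁻¹ ^ 2 = -n * b⁻¹ ^ 2 ↔ a ^ 2 = b ^ 2 := by
    rw [mul_right_inj' (neg_ne_zero.mpr hn), inv_pow, inv_pow, inv_inj]
  rw [Fintype.sum_mul_ite_ne_mul_ite_ne (sum_eq_zero_of_ne_one hχ1),
    hχ.apply_mul_sq _ (inv_ne_zero ha), hχ.apply_mul_sq _ (inv_ne_zero hb)]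
  simp only [hab]
  split_ifs <;> ring

end MulChar.IsQuadratic

lemma AddChar.sum_sum_mul_ite_sq_eq_sq_sub_two {F R : Type*} [Field F] [Fintype F]
    [DecidableEq F] [CommRing R] [IsDomain R] (hF : ringChar F ≠ 2) {ψ : AddChar F R}
    (hψ : ψ.IsPrimitive) {k : F} (hk : k ≠ 0) :
    ∑ a ∈ univ.filter (· ≠ 0), ∑ b ∈ univ.filter (· ≠ 0),
        ψ (k * a - k * b) * ((if a ^ 2 = b ^ 2 then 1 else 0) - 2)
      = Fintype.card F - 4 := by
  set s := univ.filter (fun x : F => x ≠ 0)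
  have sum_ψ : ∀ c ≠ 0, ∑ a ∈ s, ψ (c * a) = -1 := fun c hc => sum_filter_ne_zero_mul_left hψ hc
  have card_s : #s = Fintype.card F - 1 := by
    simp only [s, filter_ne', card_erase_of_mem (mem_univ _), card_univ]
  have diagonal : ∀ a ∈ s, ∑ b ∈ s, (if a ^ 2 = b ^ 2 then ψ (k * a - k * b) else 0)
      = 1 + ψ (2 * k * a) := by
    intro a ha
    rw [sum_filter_ne_zero_ite_sq_eq_sq hF _ (mem_filter.mp ha).2, sub_self, map_zero_eq_one]
    ring_nf
  calc ∑ a ∈ s, ∑ b ∈ s, ψ (k * a - k * b) * ((if a ^ 2 = b ^ 2 then 1 else 0) - 2)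
      = ∑ a ∈ s, ∑ b ∈ s, (if a ^ 2 = b ^ 2 then ψ (k * a - k * b) else 0)
          - 2 * ((∑ a ∈ s, ψ (k * a)) * ∑ b ∈ s, ψ (-k * b)) := by
        rw [sum_mul_sum, mul_sum, ← sum_sub_distrib]
        refine sum_congr rfl fun a _ => ?_
        rw [mul_sum, ← sum_sub_distrib]
        refine sum_congr rfl fun b _ => ?_
        rw [← map_add_eq_mul, neg_mul, ← sub_eq_add_neg]
        split_ifs <;> ring
    _ = Fintype.card F - 4 := by
        rw [sum_congr rfl diagonal, sum_add_distrib, sum_ψ k hk, sum_ψ (-k) (neg_ne_zero.mpr hk),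
          sum_ψ (2 * k) (mul_ne_zero (Ring.two_ne_zero hF) hk), sum_const, nsmul_eq_mul,
          mul_one, card_s, Nat.cast_sub Fintype.card_pos, Nat.cast_one]
        ring

theorem MulChar.IsQuadratic.sum_mul_sq_norm_sum_one_apply {F : Type*} [Field F] [Fintype F]
    [DecidableEq F] {χ : MulChar F ℂ} (hχ : χ.IsQuadratic) (hχ1 : χ ≠ 1)
    (hF : ringChar F ≠ 2) {ψ : AddChar F ℂ} (hψ : ψ.IsPrimitive) {n k : F} (hn : n ≠ 0)
    (hk : k ≠ 0) :
    ∑ m ∈ univ.filter (· ≠ 0), χ m *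
        ‖∑ a ∈ univ.filter (· ≠ 0), (1 : MulChar F ℂ) (m * a + n * a⁻¹) * ψ (k * a)‖ ^ 2
      = χ (-n) * (Fintype.card F - 4) := by
  set s := univ.filter (fun x : F => x ≠ 0)
  have weight : ∀ m, ∀ a ∈ s, (1 : MulChar F ℂ) (m * a + n * a⁻¹)
      = ((if m = -n * a⁻¹ ^ 2 then 0 else 1 : ℝ) : ℂ) := by
    intro m a ha
    rw [one_apply_mul_add_mul_inv m n (mem_filter.mp ha).2]
    split_ifs <;> simp
  calc ∑ m ∈ s, χ m * ‖∑ a ∈ s, (1 : MulChar F ℂ) (m * a + n * a⁻¹) * ψ (k * a)‖ ^ 2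
      = ∑ m, ∑ a ∈ s, ∑ b ∈ s, ψ (k * a - k * b) * (χ m *
          ((if m = -n * a⁻¹ ^ 2 then 0 else 1) * (if m = -n * b⁻¹ ^ 2 then 0 else 1))) := by
        rw [sum_filter_of_ne fun m _ h => by rintro rfl; simp at h]
        refine sum_congr rfl fun m _ => ?_
        rw [sum_congr rfl fun a ha => by rw [weight m a ha],
          AddChar.sq_norm_sum_ofReal_mul_eq_sum_sum, mul_sum]
        refine sum_congr rfl fun a _ => ?_
        rw [mul_sum]
        refine sum_congr rfl fun b _ => ?_
        split_ifs <;> push_cast <;> ring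
    _ = χ (-n) * ∑ a ∈ s, ∑ b ∈ s, ψ (k * a - k * b) * ((if a ^ 2 = b ^ 2 then 1 else 0) - 2) := by
        rw [sum_comm, mul_sum]
        refine sum_congr rfl fun a ha => ?_
        rw [sum_comm, mul_sum]
        refine sum_congr rfl fun b hb => ?_
        rw [← mul_sum, hχ.sum_mul_ite_ne_mul_ite_ne hχ1 hn (mem_filter.mp ha).2
          (mem_filter.mp hb).2]
        ring
    _ = χ (-n) * (Fintype.card F - 4) := by
        rw [AddChar.sum_sum_mul_ite_sq_eq_sq_sub_two hF hψ hk]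

lemma e_eq_stdAddChar (p : ℕ) [NeZero p] : e p = ZMod.stdAddChar := by
  funext x
  rw [ZMod.stdAddChar_apply, ZMod.toCircle_apply, e]

theorem stmt_9 (p : ℕ) [Fact p.Prime] (hp : 3 < p) (n k : ℤ)
    (hn : IsCoprime n (p : ℤ)) (hk : IsCoprime k (p : ℤ)) :
    ∑ m ∈ univ.filter (fun m : ZMod p => m ≠ 0),
      legChar p m * (‖(∑ a ∈ univ.filter (fun a : ZMod p => a ≠ 0),
        (1 : DirichletCharacter ℂ p) ((m : ZMod p) * a + (n : ZMod p) * a⁻¹)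
          * e p ((k : ZMod p) * a))‖) ^ 2
      = legChar p ((-n * k ^ 2 : ℤ) : ZMod p) * (p - 4) := by
  have hn0 : (n : ZMod p) ≠ 0 := ((ZMod.coe_int_isUnit_iff_isCoprime n p).mpr hn.symm).ne_zero
  have hk0 : (k : ZMod p) ≠ 0 := ((ZMod.coe_int_isUnit_iff_isCoprime k p).mpr hk.symm).ne_zero
  have hp2 : ringChar (ZMod p) ≠ 2 := by
    rw [ZMod.ringChar_zmod_n]
    omega
  have hquad : (legChar p).IsQuadratic := (quadraticChar_isQuadratic _).comp _
  have hne : legChar p ≠ 1 :=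
    (MulChar.ringHomComp_ne_one_iff (RingHom.injective_int _)).mpr (quadraticChar_ne_one hp2)
  rw [Int.cast_mul, Int.cast_neg, Int.cast_pow, hquad.apply_mul_sq _ hk0, e_eq_stdAddChar,
    hquad.sum_mul_sq_norm_sum_one_apply hne hp2 (ZMod.isPrimitive_stdAddChar p) hn0 hk0,
    ZMod.card]
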